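/- arXiv:2108.05078 — 2 statements merged into one kernel-verified Lean document; each statement's English description precedes it below -/
import Mathlib

section
/- Let 0 < ρ₂ < 1 and let (e(k)) be a nonnegative sequence satisfying e(k+1) ≤ ρ₂ e(k) + b_k with b_k ≥ 0. Then for every K ≥ 0, ∑_{k=0}^{K} e(k)² ≤ 3 e(0)²/(1−ρ₂²) + (3/(1−ρ₂)²) ∑_{s=0}^{K} b_s². -/
/-!
Squaring the recursion with the convexity bound `(ρ x + y)² ≤ ρ x² + y² / (1 - ρ)` gives the
linear recursion `e(k+1)² ≤ ρ e(k)² + b_k² / (1 - ρ)` for the squares. Summing it over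
`k < K` and absorbing `ρ ∑ e(k)²` into the left side yields
`∑_{k ≤ K} e(k)² ≤ e(0)² / (1 - ρ) + ∑_{s ≤ K} b_s² / (1 - ρ)²`, which is sharper than the claim
because `1 + ρ ≤ 3`.
-/

open Finset

lemma sq_mul_add_le {ρ : ℝ} (hρ0 : 0 ≤ ρ) (hρ1 : ρ < 1) (x y : ℝ) :
    (ρ * x + y) ^ 2 ≤ ρ * x ^ 2 + y ^ 2 / (1 - ρ) := by
  have h1ρ : 0 < 1 - ρ := by linarith
  have key : ρ * x ^ 2 + y ^ 2 / (1 - ρ) - (ρ * x + y) ^ 2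
      = ρ / (1 - ρ) * ((1 - ρ) * x - y) ^ 2 := by
    field_simp
    ring
  have : 0 ≤ ρ / (1 - ρ) * ((1 - ρ) * x - y) ^ 2 := by positivity
  linarith

lemma sq_succ_le_of_le_mul_add {ρ : ℝ} (hρ0 : 0 ≤ ρ) (hρ1 : ρ < 1) {e b : ℕ → ℝ}
    (he : ∀ k, 0 ≤ e k) (hrec : ∀ k, e (k + 1) ≤ ρ * e k + b k) (k : ℕ) :
    e (k + 1) ^ 2 ≤ ρ * e k ^ 2 + b k ^ 2 / (1 - ρ) :=
  (pow_le_pow_left₀ (he _) (hrec k) 2).trans (sq_mul_add_le hρ0 hρ1 _ _)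

lemma one_sub_mul_sum_range_le {ρ : ℝ} (hρ0 : 0 ≤ ρ) {u c : ℕ → ℝ} (hu : ∀ k, 0 ≤ u k)
    (hrec : ∀ k, u (k + 1) ≤ ρ * u k + c k) (K : ℕ) :
    (1 - ρ) * ∑ k ∈ range (K + 1), u k ≤ u 0 + ∑ k ∈ range K, c k := by
  have hshift : ∑ k ∈ range K, u (k + 1) ≤ ρ * ∑ k ∈ range K, u k + ∑ k ∈ range K, c k := by
    rw [mul_sum, ← sum_add_distrib]
    exact sum_le_sum fun k _ => hrec k
  have hlast : 0 ≤ ρ * u K := mul_nonneg hρ0 (hu K)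
  linear_combination hshift + hlast + sum_range_succ' u K - ρ * sum_range_succ u K

theorem stmt_8_general (ρ₂ : ℝ) (hρ0 : 0 < ρ₂) (hρ1 : ρ₂ < 1) (e b : ℕ → ℝ)
    (he : ∀ k, 0 ≤ e k)
    (hrec : ∀ k, e (k + 1) ≤ ρ₂ * e k + b k) (K : ℕ) :
    ∑ k ∈ Finset.range (K + 1), e k ^ 2
      ≤ 3 * e 0 ^ 2 / (1 - ρ₂ ^ 2)
        + 3 / (1 - ρ₂) ^ 2 * ∑ s ∈ Finset.range (K + 1), b s ^ 2 := by
  have h1ρ : 0 < 1 - ρ₂ := by linarith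
  set B := ∑ s ∈ range (K + 1), b s ^ 2
  have hB : 0 ≤ B := sum_nonneg fun s _ => sq_nonneg (b s)
  have hsum : (1 - ρ₂) * ∑ k ∈ range (K + 1), e k ^ 2 ≤ e 0 ^ 2 + B / (1 - ρ₂) := by
    calc (1 - ρ₂) * ∑ k ∈ range (K + 1), e k ^ 2
        ≤ e 0 ^ 2 + ∑ k ∈ range K, b k ^ 2 / (1 - ρ₂) :=
          one_sub_mul_sum_range_le hρ0.le (fun k => sq_nonneg (e k))
            (sq_succ_le_of_le_mul_add hρ0.le hρ1 he hrec) K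
      _ ≤ e 0 ^ 2 + B / (1 - ρ₂) := by
          rw [← sum_div]
          gcongr
          exact sum_le_sum_of_subset_of_nonneg (range_subset_range.2 K.le_succ)
            fun s _ _ => sq_nonneg (b s)
  have he0 : e 0 ^ 2 / (1 - ρ₂) ≤ 3 * e 0 ^ 2 / (1 - ρ₂ ^ 2) := by
    rw [div_le_div_iff₀ h1ρ (by nlinarith)]
    nlinarith [mul_nonneg (mul_nonneg (sq_nonneg (e 0)) h1ρ.le) (by linarith : (0 : ℝ) ≤ 2 - ρ₂)]
  have hB3 : B / (1 - ρ₂) ^ 2 ≤ 3 / (1 - ρ₂) ^ 2 * B := by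
    rw [div_mul_eq_mul_div]
    gcongr
    linarith
  calc ∑ k ∈ range (K + 1), e k ^ 2 ≤ (e 0 ^ 2 + B / (1 - ρ₂)) / (1 - ρ₂) :=
        (le_div_iff₀' h1ρ).2 hsum
    _ = e 0 ^ 2 / (1 - ρ₂) + B / (1 - ρ₂) ^ 2 := by
        field_simp
    _ ≤ _ := add_le_add he0 hB3

theorem stmt_8 (ρ₂ : ℝ) (hρ0 : 0 < ρ₂) (hρ1 : ρ₂ < 1) (e b : ℕ → ℝ)
    (he : ∀ k, 0 ≤ e k) (hb : ∀ k, 0 ≤ b k)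
    (hrec : ∀ k, e (k + 1) ≤ ρ₂ * e k + b k) (K : ℕ) :
    ∑ k ∈ Finset.range (K + 1), e k ^ 2
      ≤ 3 * e 0 ^ 2 / (1 - ρ₂ ^ 2)
        + 3 / (1 - ρ₂) ^ 2 * ∑ s ∈ Finset.range (K + 1), b s ^ 2 :=
  stmt_8_general ρ₂ hρ0 hρ1 e b he hrec K
end

section
/- Let M be a 3×3 nonnegative real matrix. Then the spectral radius of M is strictly less than 1 if and only if all three leading principal minors of I₃ − M are positive: (I−M)_{11} > 0, det of the top-left 2×2 block of I−M is positive, and det(I−M) > 0. -/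
/-!
If `x > 0` and `M x < x` entrywise, comparing an eigenvector `v` with `x` at an index where
`|v_i| / x_i` is largest shows that every eigenvalue of `M` lies in the open unit disc. For
`A = 1 - M` with positive leading principal minors, `x = adj(A) 1` is such a vector:
`A x = det A • 1 > 0`, and for a 3×3 matrix with nonpositive off-diagonal entries the leading
minors force all principal minors, hence every cofactor sum `x_i`, to be positive.

Conversely, if `ρ(M) < 1` then `det (1 - s M)` has no zero for `s ∈ [0, 1]` (a zero would make
`s⁻¹` an eigenvalue of `M`), so it keeps the sign of its value `1` at `s = 0`. Principal
submatrices of a nonnegative matrix have no larger spectral radius, by Gelfand's formula and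
entrywise domination of their powers, so every leading principal minor of `1 - M` is positive.
-/

section SpectralRadius

variable {A B : Type*} [NormedRing A] [NormedAlgebra ℂ A] [CompleteSpace A]
  [NormedRing B] [NormedAlgebra ℂ B] [CompleteSpace B]

lemma spectralRadius_le_of_nnnorm_pow_le {a : A} {b : B} (h : ∀ n : ℕ, ‖b ^ n‖₊ ≤ ‖a ^ n‖₊) :
    spectralRadius ℂ b ≤ spectralRadius ℂ a :=
  le_of_tendsto_of_tendsto' (spectrum.pow_nnnorm_pow_one_div_tendsto_nhds_spectralRadius b)
    (spectrum.pow_nnnorm_pow_one_div_tendsto_nhds_spectralRadius a) fun n => by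
      gcongr
      exact h n

end SpectralRadius

lemma Fintype.sum_comp_embedding_le {ι κ R : Type*} [Fintype ι] [Fintype κ] [AddCommMonoid R]
    [PartialOrder R] [IsOrderedAddMonoid R] (f : κ ↪ ι) {g : ι → R} (hg : ∀ i, 0 ≤ g i) :
    ∑ k, g (f k) ≤ ∑ i, g i := by
  rw [← Finset.sum_map Finset.univ f g]
  exact Finset.sum_le_sum_of_subset_of_nonneg (Finset.subset_univ _) fun i _ _ => hg i

namespace Matrix

attribute [local instance] Matrix.linftyOpSeminormedAddCommGroup Matrix.linftyOpNormedRing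
  Matrix.linftyOpNormedAlgebra

variable {ι κ : Type*} [Fintype ι] [Fintype κ]

lemma linfty_opNNNorm_le_of_le_submatrix {α : Type*} [SeminormedAddCommGroup α]
    {A : Matrix ι ι α} {B : Matrix κ κ α} (f : κ ↪ ι)
    (h : ∀ i j, ‖B i j‖₊ ≤ ‖A (f i) (f j)‖₊) : ‖B‖₊ ≤ ‖A‖₊ := by
  rw [linfty_opNNNorm_def, linfty_opNNNorm_def]
  refine Finset.sup_le fun i _ => le_trans ?_ (Finset.le_sup (Finset.mem_univ (f i)))
  exact (Finset.sum_le_sum fun j _ => h i j).trans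
    (Fintype.sum_comp_embedding_le f (g := fun m => ‖A (f i) m‖₊) fun _ => zero_le)

lemma mulVec_le_mulVec_of_nonneg {R : Type*} [Semiring R] [PartialOrder R] [IsOrderedRing R]
    {M : Matrix ι ι R} (hM : ∀ i j, 0 ≤ M i j) {u v : ι → R}
    (huv : ∀ i, u i ≤ v i) (i : ι) : (M *ᵥ u) i ≤ (M *ᵥ v) i :=
  Finset.sum_le_sum fun j _ => mul_le_mul_of_nonneg_left (huv j) (hM i j)

lemma norm_mul_le_mulVec_norm {M : Matrix ι ι ℝ} (hM : ∀ i j, 0 ≤ M i j) {z : ℂ} {v : ι → ℂ}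
    (hv : M.map Complex.ofReal *ᵥ v = z • v) (i : ι) :
    ‖z‖ * ‖v i‖ ≤ (M *ᵥ fun j => ‖v j‖) i := by
  calc ‖z‖ * ‖v i‖ = ‖∑ j, (M i j : ℂ) * v j‖ := by
        rw [← norm_mul, ← smul_eq_mul, ← Pi.smul_apply, ← hv]; rfl
    _ ≤ ∑ j, ‖(M i j : ℂ) * v j‖ := norm_sum_le _ _
    _ = (M *ᵥ fun j => ‖v j‖) i := by
        simp only [norm_mul, Complex.norm_real, Real.norm_of_nonneg (hM _ _)]; rfl

variable [DecidableEq ι]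

lemma exists_mulVec_eq_smul_of_mem_spectrum {A : Matrix ι ι ℂ} {z : ℂ}
    (hz : z ∈ spectrum ℂ A) : ∃ v ≠ 0, A *ᵥ v = z • v := by
  rw [← spectrum_toLin', ← Module.End.hasEigenvalue_iff_mem_spectrum] at hz
  obtain ⟨v, hv, hv0⟩ := hz.exists_hasEigenvector
  exact ⟨v, hv0, by rwa [Module.End.mem_eigenspace_iff, toLin'_apply] at hv⟩

lemma norm_lt_one_of_mem_spectrum {M : Matrix ι ι ℝ} (hM : ∀ i j, 0 ≤ M i j) {x : ι → ℝ}
    (hx : ∀ i, 0 < x i) (hMx : ∀ i, (M *ᵥ x) i < x i) {z : ℂ}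
    (hz : z ∈ spectrum ℂ (M.map Complex.ofReal)) : ‖z‖ < 1 := by
  obtain ⟨v, hv0, hv⟩ := exists_mulVec_eq_smul_of_mem_spectrum hz
  set w : ι → ℝ := fun j => ‖v j‖
  obtain ⟨j₀, hj₀⟩ := Function.ne_iff.mp hv0
  obtain ⟨i, -, hi⟩ := Finset.univ.exists_max_image (fun j => w j / x j) ⟨j₀, Finset.mem_univ _⟩
  set c := w i / x i
  have hwc : ∀ j, w j ≤ c * x j := fun j => (div_le_iff₀ (hx j)).mp (hi j (Finset.mem_univ j))
  have hc : 0 < c :=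
    (div_pos (norm_pos_iff.mpr hj₀) (hx j₀)).trans_le (hi j₀ (Finset.mem_univ _))
  have hci : c * x i = w i := div_mul_cancel₀ _ (hx i).ne'
  have hlt : ‖z‖ * w i < w i :=
    calc ‖z‖ * w i ≤ (M *ᵥ w) i := norm_mul_le_mulVec_norm hM hv i
      _ ≤ (M *ᵥ (c • x)) i := mulVec_le_mulVec_of_nonneg hM hwc i
      _ = c * (M *ᵥ x) i := by rw [mulVec_smul, Pi.smul_apply, smul_eq_mul]
      _ < c * x i := mul_lt_mul_of_pos_left (hMx i) hc
      _ = w i := hci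
  exact (mul_lt_iff_lt_one_left (hci ▸ mul_pos hc (hx i))).mp hlt

lemma spectralRadius_lt_one_of_mulVec_lt {M : Matrix ι ι ℝ} (hM : ∀ i j, 0 ≤ M i j)
    {x : ι → ℝ} (hx : ∀ i, 0 < x i) (hMx : ∀ i, (M *ᵥ x) i < x i) :
    spectralRadius ℂ (M.map Complex.ofReal) < 1 := by
  rcases (spectrum ℂ (M.map Complex.ofReal)).eq_empty_or_nonempty with h | h
  · simp [spectralRadius, h]
  · exact_mod_cast spectrum.spectralRadius_lt_of_forall_lt_of_nonempty h fun z hz => by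
      exact_mod_cast norm_lt_one_of_mem_spectrum hM hx hMx hz

lemma det_smul_one_sub_ne_zero_of_spectralRadius_lt (M : Matrix ι ι ℝ) {t : ℝ}
    (ht : spectralRadius ℂ (M.map Complex.ofReal) < ‖t‖₊) : (t • 1 - M).det ≠ 0 := by
  have hunit := spectrum.mem_resolventSet_of_spectralRadius_lt (k := (t : ℂ))
    (by rwa [Complex.nnnorm_real])
  rw [resolventSet, Set.mem_ofPred_eq, isUnit_iff_isUnit_det, Algebra.algebraMap_eq_smul_one,
    show (t : ℂ) • (1 : Matrix ι ι ℂ) - M.map Complex.ofReal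
      = Complex.ofRealHom.mapMatrix (t • 1 - M) by ext i j; by_cases hij : i = j <;> simp [hij],
    ← RingHom.map_det, isUnit_iff_ne_zero] at hunit
  exact fun h => hunit (by simp [h])

lemma det_one_sub_pos_of_spectralRadius_lt_one (M : Matrix ι ι ℝ)
    (hM : spectralRadius ℂ (M.map Complex.ofReal) < 1) : 0 < (1 - M).det := by
  have hne : ∀ s ∈ Set.Icc (0 : ℝ) 1, (1 - s • M).det ≠ 0 := by
    rintro s ⟨hs0, hs1⟩
    rcases hs0.eq_or_lt with rfl | hs
    · simp
    have hinv : spectralRadius ℂ (M.map Complex.ofReal) < ‖s⁻¹‖₊ := by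
      refine hM.trans_le ?_
      rw [nnnorm_inv, Real.nnnorm_of_nonneg hs.le]
      exact_mod_cast one_le_inv_iff₀.mpr ⟨hs, hs1⟩
    rw [show 1 - s • M = s • (s⁻¹ • 1 - M) by
      rw [smul_sub, smul_smul, mul_inv_cancel₀ hs.ne', one_smul], det_smul]
    exact mul_ne_zero (pow_ne_zero _ hs.ne') (det_smul_one_sub_ne_zero_of_spectralRadius_lt M hinv)
  by_contra! hle
  have hcont : Continuous fun s : ℝ => (1 - s • M).det := by fun_prop
  obtain ⟨s, hs, hs0⟩ := intermediate_value_Icc' zero_le_one hcont.continuousOn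
    ⟨by simpa using hle, by simp⟩
  exact hne s hs hs0

lemma mulVec_adjugate_one_sub_lt (M : Matrix ι ι ℝ) (h : 0 < (1 - M).det) (i : ι) :
    (M *ᵥ ((1 - M).adjugate *ᵥ 1)) i < ((1 - M).adjugate *ᵥ 1) i := by
  have hadj : M * (1 - M).adjugate = (1 - M).adjugate - (1 - M).det • 1 := by
    rw [← mul_adjugate, sub_mul, one_mul, sub_sub_cancel]
  rw [mulVec_mulVec, hadj, sub_mulVec, smul_mulVec, one_mulVec]
  simpa using h

variable [DecidableEq κ]

lemma submatrix_pow_apply_le {R : Type*} [Semiring R] [PartialOrder R] [IsOrderedRing R]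
    {M : Matrix ι ι R} (hM : ∀ i j, 0 ≤ M i j) (f : κ ↪ ι) (n : ℕ)
    (i j : κ) : ((M.submatrix f f) ^ n) i j ≤ (M ^ n) (f i) (f j) := by
  induction n generalizing j with
  | zero => simp [one_apply]
  | succ n ih =>
    rw [pow_succ, pow_succ, mul_apply, mul_apply]
    calc ∑ l, (M.submatrix f f ^ n) i l * M (f l) (f j)
        ≤ ∑ l, (M ^ n) (f i) (f l) * M (f l) (f j) :=
          Finset.sum_le_sum fun l _ => mul_le_mul_of_nonneg_right (ih l) (hM _ _)
      _ ≤ ∑ m, (M ^ n) (f i) m * M m (f j) :=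
          Fintype.sum_comp_embedding_le f (g := fun m => (M ^ n) (f i) m * M m (f j))
            fun m => mul_nonneg (pow_apply_nonneg hM n _ _) (hM _ _)

lemma spectralRadius_submatrix_le {M : Matrix ι ι ℝ} (hM : ∀ i j, 0 ≤ M i j) (f : κ ↪ ι) :
    spectralRadius ℂ ((M.submatrix f f).map Complex.ofReal) ≤
      spectralRadius ℂ (M.map Complex.ofReal) := by
  refine spectralRadius_le_of_nnnorm_pow_le fun n => ?_
  rw [show Complex.ofReal = ⇑Complex.ofRealHom from rfl, ← Matrix.map_pow, ← Matrix.map_pow]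
  refine linfty_opNNNorm_le_of_le_submatrix f fun i j => ?_
  rw [map_apply, map_apply, Complex.ofRealHom_eq_coe, Complex.ofRealHom_eq_coe,
    Complex.nnnorm_real, Complex.nnnorm_real,
    Real.nnnorm_of_nonneg (pow_apply_nonneg (A := M.submatrix f f) (fun _ _ => hM _ _) n i j),
    Real.nnnorm_of_nonneg (pow_apply_nonneg hM n _ _)]
  exact submatrix_pow_apply_le hM f n i j

lemma det_one_sub_submatrix_pos {M : Matrix ι ι ℝ} (hM : ∀ i j, 0 ≤ M i j)
    (hρ : spectralRadius ℂ (M.map Complex.ofReal) < 1) (f : κ ↪ ι) :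
    0 < ((1 - M).submatrix f f).det := by
  rw [show (1 - M).submatrix f f = 1 - M.submatrix f f by rw [← submatrix_one f f.injective]; rfl]
  exact det_one_sub_pos_of_spectralRadius_lt_one _ ((spectralRadius_submatrix_le hM f).trans_lt hρ)

lemma adjugate_mulVec_one_pos_of_fin_three (A : Matrix (Fin 3) (Fin 3) ℝ)
    (hA : ∀ i j, i ≠ j → A i j ≤ 0) (h₁ : 0 < A 0 0) (h₂ : 0 < A 0 0 * A 1 1 - A 0 1 * A 1 0)
    (h₃ : 0 < A.det) (i : Fin 3) : 0 < (A.adjugate *ᵥ 1) i := by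
  have a01 := hA 0 1 (by decide)
  have a02 := hA 0 2 (by decide)
  have a10 := hA 1 0 (by decide)
  have a12 := hA 1 2 (by decide)
  have a20 := hA 2 0 (by decide)
  have a21 := hA 2 1 (by decide)
  rw [det_fin_three] at h₃
  have p01 := mul_nonneg_of_nonpos_of_nonpos a01 a10
  have p02 := mul_nonneg_of_nonpos_of_nonpos a02 a20
  have p12 := mul_nonneg_of_nonpos_of_nonpos a12 a21
  have cyc₁ := mul_nonpos_of_nonneg_of_nonpos (mul_nonneg_of_nonpos_of_nonpos a01 a12) a20
  have cyc₂ := mul_nonpos_of_nonneg_of_nonpos (mul_nonneg_of_nonpos_of_nonpos a02 a10) a21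
  have h11 : 0 < A 1 1 := by nlinarith
  have h22 : 0 < A 2 2 := by nlinarith [mul_nonneg h₁.le p12, mul_nonneg h11.le p02]
  have m12 : 0 < A 1 1 * A 2 2 - A 1 2 * A 2 1 := by
    nlinarith [mul_nonneg h22.le p01, mul_nonneg h11.le p02]
  have m02 : 0 < A 0 0 * A 2 2 - A 0 2 * A 2 0 := by
    nlinarith [mul_nonneg h22.le p01, mul_nonneg h₁.le p12]
  fin_cases i <;> simp [adjugate_fin_three, mulVec, dotProduct, Fin.sum_univ_three] <;>
    nlinarith [mul_nonneg_of_nonpos_of_nonpos a01 a12]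

end Matrix

theorem stmt_19 (M : Matrix (Fin 3) (Fin 3) ℝ) (hM : ∀ i j, 0 ≤ M i j) :
    spectralRadius ℂ (M.map Complex.ofReal) < 1 ↔
      ((1 - M) 0 0 > 0 ∧
        (1 - M) 0 0 * (1 - M) 1 1 - (1 - M) 0 1 * (1 - M) 1 0 > 0 ∧
        (1 - M).det > 0) := by
  constructor
  · intro hρ
    have hminor {k : ℕ} (hk : k ≤ 3) := Matrix.det_one_sub_submatrix_pos hM hρ (Fin.castLEEmb hk)
    exact ⟨by simpa using hminor (by norm_num : 1 ≤ 3),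
      by simpa [Matrix.det_fin_two] using hminor (by norm_num : 2 ≤ 3),
      M.det_one_sub_pos_of_spectralRadius_lt_one hρ⟩
  · rintro ⟨h₁, h₂, h₃⟩
    have hZ : ∀ i j, i ≠ j → (1 - M) i j ≤ 0 := fun i j hij => by
      simpa [Matrix.one_apply_ne hij] using hM i j
    exact Matrix.spectralRadius_lt_one_of_mulVec_lt hM
      ((1 - M).adjugate_mulVec_one_pos_of_fin_three hZ h₁ h₂ h₃) (M.mulVec_adjugate_one_sub_lt h₃)
end
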